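/- (Circumsphere of the resistive embedding) Let Q be symmetric PSD with ker(Q) = span(1), let B ∈ ℝ^{(n−1)×n} satisfy BᵀB = Q† and B1 = 0, and let p, σ² be the resistance curvature and radius of Q. Then for every i ∈ [n], ‖B(p − 1ᵢ)‖² = σ²; that is, the point Bp is equidistant (at distance σ) from all embedded vertices B1ᵢ, so it is the circumcenter of the simplex with circumradius σ. -/

import Mathlib

/-!
Because `Q` is symmetric with kernel spanned by `1`, the matrix `Q + J/n` (with `J` the all-ones
matrix) is invertible and `Q† = (Q + J/n)⁻¹ - J/n`; hence `Q†Q = I - J/n` and `Q†1 = 0`. Then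
`‖B(p - 1ᵢ)‖² = (p - 1ᵢ)ᵀ Q† (p - 1ᵢ)`, and `Q†p = ζ/2 - (Σζ / 2n) 1`, so expanding the quadratic
form the terms in `ζᵢ` cancel and what remains is `ζᵀQζ/4 + Σζ/n = σ²` for every `i`.
-/

open Matrix Classical

/-- The Moore–Penrose pseudoinverse of a real matrix, defined via its four
characterizing Penrose equations (which have a unique solution). -/
noncomputable def pinv {m k : Type*} [Fintype m] [Fintype k]
    (A : Matrix m k ℝ) : Matrix k m ℝ :=
  if h : ∃ X : Matrix k m ℝ,
      A * X * A = A ∧ X * A * X = X ∧ (A * X)ᵀ = A * X ∧ (X * A)ᵀ = X * A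
  then h.choose else 0

theorem mulVec_dotProduct_mulVec_self {m k : Type*} [Fintype m] [Fintype k]
    (B : Matrix m k ℝ) (v : k → ℝ) : B *ᵥ v ⬝ᵥ B *ᵥ v = v ⬝ᵥ (Bᵀ * B) *ᵥ v := by
  rw [dotProduct_mulVec, ← mulVec_transpose, mulVec_mulVec, dotProduct_comm]

def IsMoorePenroseInverse {m k : Type*} [Fintype m] [Fintype k]
    (A : Matrix m k ℝ) (X : Matrix k m ℝ) : Prop :=
  A * X * A = A ∧ X * A * X = X ∧ (A * X)ᵀ = A * X ∧ (X * A)ᵀ = X * A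

section MoorePenrose

variable {m k : Type*} [Fintype m] [Fintype k] {A : Matrix m k ℝ} {X Y : Matrix k m ℝ}

theorem IsMoorePenroseInverse.unique (hX : IsMoorePenroseInverse A X)
    (hY : IsMoorePenroseInverse A Y) : X = Y := by
  obtain ⟨hX1, hX2, hX3, hX4⟩ := hX
  obtain ⟨hY1, hY2, hY3, hY4⟩ := hY
  have hAX : A * X = A * Y := by
    calc A * X = (A * Y)ᵀ * (A * X)ᵀ := by rw [hX3, hY3, ← Matrix.mul_assoc, hY1]
      _ = (A * X * A * Y)ᵀ := by simp only [transpose_mul, Matrix.mul_assoc]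
      _ = A * Y := by rw [hX1, hY3]
  have hXA : X * A = Y * A := by
    calc X * A = (X * A)ᵀ * (Y * A)ᵀ := by
          rw [hX4, hY4, ← Matrix.mul_assoc, Matrix.mul_assoc X, Matrix.mul_assoc X, hY1]
      _ = (Y * (A * X * A))ᵀ := by simp only [transpose_mul, Matrix.mul_assoc]
      _ = Y * A := by rw [hX1, hY4]
  calc X = X * A * X := hX2.symm
    _ = Y * A * Y := by rw [hXA, Matrix.mul_assoc, hAX, ← Matrix.mul_assoc]
    _ = Y := hY2

theorem pinv_eq_of_isMoorePenroseInverse (hX : IsMoorePenroseInverse A X) : pinv A = X := by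
  have hex : ∃ Y, IsMoorePenroseInverse A Y := ⟨X, hX⟩
  rw [pinv]
  exact (dif_pos hex).trans (hex.choose_spec.unique hX)

end MoorePenrose

def onesMatrix (n : ℕ) : Matrix (Fin n) (Fin n) ℝ := of fun _ _ => 1

section OnesMatrix

variable {n : ℕ}

theorem transpose_onesMatrix : (onesMatrix n)ᵀ = onesMatrix n := rfl

theorem onesMatrix_mulVec (v : Fin n → ℝ) : onesMatrix n *ᵥ v = fun _ => ∑ i, v i := by
  ext; simp [onesMatrix, mulVec, dotProduct]

theorem onesMatrix_mul_self : onesMatrix n * onesMatrix n = (n : ℝ) • onesMatrix n := by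
  ext; simp [onesMatrix, mul_apply]

theorem mul_onesMatrix_eq_zero_iff {Q : Matrix (Fin n) (Fin n) ℝ} :
    Q * onesMatrix n = 0 ↔ Q *ᵥ 1 = 0 := by
  constructor
  · intro h
    ext i
    simpa [mul_apply, onesMatrix, mulVec, dotProduct] using congrFun (congrFun h i) i
  · intro h
    ext i j
    simpa [mul_apply, onesMatrix, mulVec, dotProduct] using congrFun h i


end OnesMatrix

def KerEqSpanOnes {n : ℕ} (Q : Matrix (Fin n) (Fin n) ℝ) : Prop :=
  ∀ v : Fin n → ℝ, Q *ᵥ v = 0 ↔ ∃ c : ℝ, v = fun _ => c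

section KernelSpannedByOnes

variable {n : ℕ} {Q : Matrix (Fin n) (Fin n) ℝ}

theorem KerEqSpanOnes.mulVec_one (hker : KerEqSpanOnes Q) : Q *ᵥ 1 = 0 :=
  (hker 1).2 ⟨1, rfl⟩

theorem ones_vecMul_eq_zero (hQ : Q.IsSymm) (hQ1 : Q *ᵥ 1 = 0) : 1 ᵥ* Q = 0 := by
  rw [← hQ.eq, vecMul_transpose, hQ1]

theorem onesMatrix_mul_eq_zero (hQ : Q.IsSymm) (hQ1 : Q *ᵥ 1 = 0) : onesMatrix n * Q = 0 := by
  rw [← hQ.eq, ← transpose_onesMatrix, ← transpose_mul, mul_onesMatrix_eq_zero_iff.2 hQ1,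
    transpose_zero]

theorem eq_zero_of_add_onesMatrix_mulVec_eq_zero [NeZero n] (hQ : Q.IsSymm)
    (hker : KerEqSpanOnes Q) {v : Fin n → ℝ} (hv : (Q + (n : ℝ)⁻¹ • onesMatrix n) *ᵥ v = 0) :
    v = 0 := by
  have h1Q : 1 ᵥ* Q = 0 := ones_vecMul_eq_zero hQ hker.mulVec_one
  have hsum : ∑ i, v i = 0 := by
    have := congrArg (1 ⬝ᵥ ·) hv
    simp only [add_mulVec, smul_mulVec, dotProduct_add, dotProduct_mulVec, h1Q,
      onesMatrix_mulVec] at this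
    simpa [dotProduct, NeZero.ne] using this
  obtain ⟨c, rfl⟩ := (hker v).1 (by
    simpa [add_mulVec, smul_mulVec, onesMatrix_mulVec, hsum, ← Pi.zero_def] using hv)
  ext
  simpa [NeZero.ne] using hsum

theorem isUnit_add_onesMatrix [NeZero n] (hQ : Q.IsSymm) (hker : KerEqSpanOnes Q) :
    IsUnit (Q + (n : ℝ)⁻¹ • onesMatrix n) := by
  rw [← mulVec_injective_iff_isUnit]
  intro x y hxy
  rw [← sub_eq_zero]
  exact eq_zero_of_add_onesMatrix_mulVec_eq_zero hQ hker (by rw [mulVec_sub, hxy, sub_self])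

end KernelSpannedByOnes

noncomputable def centeredInverse {n : ℕ} (Q : Matrix (Fin n) (Fin n) ℝ) :
    Matrix (Fin n) (Fin n) ℝ :=
  (Q + (n : ℝ)⁻¹ • onesMatrix n)⁻¹ - (n : ℝ)⁻¹ • onesMatrix n

theorem isSymm_centeredInverse {n : ℕ} {Q : Matrix (Fin n) (Fin n) ℝ} (hQ : Q.IsSymm) :
    (centeredInverse Q).IsSymm := by
  rw [IsSymm, centeredInverse, transpose_sub, transpose_smul, transpose_nonsing_inv,
    transpose_add, transpose_smul, hQ.eq, transpose_onesMatrix]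

section CenteredInverse

variable {n : ℕ} [NeZero n] {Q : Matrix (Fin n) (Fin n) ℝ}

theorem onesMatrix_mul_inv_add_onesMatrix (hQ : Q.IsSymm) (hker : KerEqSpanOnes Q) :
    onesMatrix n * (Q + (n : ℝ)⁻¹ • onesMatrix n)⁻¹ = onesMatrix n := by
  have hJQ := onesMatrix_mul_eq_zero hQ hker.mulVec_one
  have hJM : onesMatrix n * (Q + (n : ℝ)⁻¹ • onesMatrix n) = onesMatrix n := by
    rw [Matrix.mul_add, hJQ, Matrix.mul_smul, onesMatrix_mul_self, smul_smul,
      inv_mul_cancel₀ (NeZero.ne _), zero_add, one_smul]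
  have := (isUnit_add_onesMatrix hQ hker).invertible
  exact (mul_inv_eq_iff_eq_mul_of_invertible _ _ _).2 hJM.symm

theorem inv_add_onesMatrix_mul_onesMatrix (hQ : Q.IsSymm) (hker : KerEqSpanOnes Q) :
    (Q + (n : ℝ)⁻¹ • onesMatrix n)⁻¹ * onesMatrix n = onesMatrix n := by
  have hMJ : (Q + (n : ℝ)⁻¹ • onesMatrix n) * onesMatrix n = onesMatrix n := by
    rw [Matrix.add_mul, mul_onesMatrix_eq_zero_iff.2 hker.mulVec_one, Matrix.smul_mul,
      onesMatrix_mul_self, smul_smul, inv_mul_cancel₀ (NeZero.ne _), zero_add, one_smul]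
  have := (isUnit_add_onesMatrix hQ hker).invertible
  exact (inv_mul_eq_iff_eq_mul_of_invertible _ _ _).2 hMJ.symm

theorem mul_centeredInverse (hQ : Q.IsSymm) (hker : KerEqSpanOnes Q) :
    Q * centeredInverse Q = 1 - (n : ℝ)⁻¹ • onesMatrix n := by
  have hM := mul_nonsing_inv _ ((isUnit_iff_isUnit_det _).mp (isUnit_add_onesMatrix hQ hker))
  rw [Matrix.add_mul, Matrix.smul_mul, onesMatrix_mul_inv_add_onesMatrix hQ hker] at hM
  rw [centeredInverse, Matrix.mul_sub, Matrix.mul_smul,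
    mul_onesMatrix_eq_zero_iff.2 hker.mulVec_one, smul_zero, sub_zero]
  exact eq_sub_of_add_eq hM

theorem centeredInverse_mul (hQ : Q.IsSymm) (hker : KerEqSpanOnes Q) :
    centeredInverse Q * Q = 1 - (n : ℝ)⁻¹ • onesMatrix n := by
  have hM := nonsing_inv_mul _ ((isUnit_iff_isUnit_det _).mp (isUnit_add_onesMatrix hQ hker))
  rw [Matrix.mul_add, Matrix.mul_smul, inv_add_onesMatrix_mul_onesMatrix hQ hker] at hM
  rw [centeredInverse, Matrix.sub_mul, Matrix.smul_mul,
    onesMatrix_mul_eq_zero hQ hker.mulVec_one, smul_zero, sub_zero]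
  exact eq_sub_of_add_eq hM

theorem onesMatrix_mul_centeredInverse (hQ : Q.IsSymm) (hker : KerEqSpanOnes Q) :
    onesMatrix n * centeredInverse Q = 0 := by
  rw [centeredInverse, Matrix.mul_sub, onesMatrix_mul_inv_add_onesMatrix hQ hker, Matrix.mul_smul,
    onesMatrix_mul_self, smul_smul, inv_mul_cancel₀ (NeZero.ne _), one_smul, sub_self]

theorem centeredInverse_mulVec_one (hQ : Q.IsSymm) (hker : KerEqSpanOnes Q) :
    centeredInverse Q *ᵥ 1 = 0 := by
  rw [← mul_onesMatrix_eq_zero_iff, centeredInverse, Matrix.sub_mul,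
    inv_add_onesMatrix_mul_onesMatrix hQ hker, Matrix.smul_mul, onesMatrix_mul_self, smul_smul,
    inv_mul_cancel₀ (NeZero.ne _), one_smul, sub_self]

theorem isMoorePenroseInverse_centeredInverse (hQ : Q.IsSymm) (hker : KerEqSpanOnes Q) :
    IsMoorePenroseInverse Q (centeredInverse Q) := by
  have hJQ := onesMatrix_mul_eq_zero hQ hker.mulVec_one
  refine ⟨?_, ?_, ?_, ?_⟩
  · rw [mul_centeredInverse hQ hker, Matrix.sub_mul, Matrix.one_mul, Matrix.smul_mul, hJQ,
      smul_zero, sub_zero]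
  · rw [centeredInverse_mul hQ hker, Matrix.sub_mul, Matrix.one_mul, Matrix.smul_mul,
      onesMatrix_mul_centeredInverse hQ hker, smul_zero, sub_zero]
  · rw [mul_centeredInverse hQ hker, transpose_sub, transpose_one, transpose_smul,
      transpose_onesMatrix]
  · rw [centeredInverse_mul hQ hker, transpose_sub, transpose_one, transpose_smul,
      transpose_onesMatrix]

end CenteredInverse

theorem pinv_eq_centeredInverse {n : ℕ} [NeZero n] {Q : Matrix (Fin n) (Fin n) ℝ}
    (hQ : Q.IsSymm) (hker : KerEqSpanOnes Q) :
    pinv Q = centeredInverse Q :=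
  pinv_eq_of_isMoorePenroseInverse (isMoorePenroseInverse_centeredInverse hQ hker)

theorem sub_single_dotProduct_mulVec_sub_single {n : ℕ} [NeZero n]
    {Q X : Matrix (Fin n) (Fin n) ℝ} (h1Q : 1 ᵥ* Q = 0) (hX : X.IsSymm) (hX1 : X *ᵥ 1 = 0)
    (hXQ : X * Q = 1 - (n : ℝ)⁻¹ • onesMatrix n) {p : Fin n → ℝ}
    (hp : p = (1 / 2 : ℝ) • Q *ᵥ X.diag + (1 / (n : ℝ)) • 1) (i : Fin n) :
    (p - Pi.single i 1) ⬝ᵥ X *ᵥ (p - Pi.single i 1) =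
      (1 / 4) * (X.diag ⬝ᵥ Q *ᵥ X.diag) + (1 / (n : ℝ)) * ∑ j, X.diag j := by
  set ζ := X.diag
  set s := ∑ j, ζ j
  have hXp : X *ᵥ p = (1 / 2 : ℝ) • ζ - (s / (2 * n)) • 1 := by
    rw [hp, mulVec_add, mulVec_smul, mulVec_smul, mulVec_mulVec, hXQ, hX1, sub_mulVec,
      one_mulVec, smul_mulVec, onesMatrix_mulVec]
    ext k
    simp only [Pi.add_apply, Pi.sub_apply, Pi.smul_apply, smul_eq_mul, Pi.zero_apply, Pi.one_apply]
    ring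
  have hXi : X *ᵥ Pi.single i 1 = fun k => X k i := by
    ext k; simp [mulVec_single]
  have hpXi : p ⬝ᵥ (fun k => X k i) = (X *ᵥ p) i := by
    simp only [dotProduct, mulVec]
    exact Finset.sum_congr rfl fun k _ => by rw [hX.apply, mul_comm]
  have h1p : p ⬝ᵥ 1 = 1 := by
    rw [hp, add_dotProduct, smul_dotProduct, smul_dotProduct, dotProduct_comm, dotProduct_mulVec,
      h1Q]
    simp [dotProduct, NeZero.ne]
  have hpζ : p ⬝ᵥ ζ = (1 / 2) * (ζ ⬝ᵥ Q *ᵥ ζ) + (1 / n) * s := by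
    rw [hp, add_dotProduct, smul_dotProduct, smul_dotProduct, dotProduct_comm (Q *ᵥ ζ)]
    simp [dotProduct, s]
  rw [mulVec_sub, hXi, sub_dotProduct, dotProduct_sub, dotProduct_sub, hpXi, hXp,
    single_dotProduct, single_dotProduct, dotProduct_sub, dotProduct_smul, dotProduct_smul, h1p,
    hpζ]
  simp only [Pi.sub_apply, Pi.smul_apply, Pi.one_apply, smul_eq_mul, ζ, diag_apply]
  ring

theorem circumsphere_of_resistive_embedding_general
    {n : ℕ} (Q : Matrix (Fin n) (Fin n) ℝ)
    (hQ : Q.PosSemidef)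
    (hker : ∀ v : Fin n → ℝ, Q.mulVec v = 0 ↔ ∃ c : ℝ, v = fun _ => c)
    (B : Matrix (Fin (n - 1)) (Fin n) ℝ)
    (hB : Bᵀ * B = pinv Q)
    (ζ : Fin n → ℝ) (hζ : ζ = fun i => pinv Q i i)
    (p : Fin n → ℝ)
    (hp : p = (1 / 2 : ℝ) • Q.mulVec ζ + (1 / (n : ℝ)) • ((fun _ => 1) : Fin n → ℝ))
    (σ2 : ℝ) (hσ2 : σ2 = (1 / 4) * (ζ ⬝ᵥ Q.mulVec ζ) + (1 / (n : ℝ)) * ∑ i, ζ i) :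
    ∀ i : Fin n,
      B.mulVec (p - Pi.single i 1) ⬝ᵥ B.mulVec (p - Pi.single i 1) = σ2 := by
  intro i
  have : NeZero n := .of_pos i.pos
  have hQs : Q.IsSymm := isHermitian_iff_isSymm.mp hQ.isHermitian
  rw [pinv_eq_centeredInverse hQs hker] at hB hζ
  subst hζ hσ2
  rw [mulVec_dotProduct_mulVec_self, hB]
  exact sub_single_dotProduct_mulVec_sub_single
    (ones_vecMul_eq_zero hQs (KerEqSpanOnes.mulVec_one hker)) (isSymm_centeredInverse hQs) (centeredInverse_mulVec_one hQs hker)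
    (centeredInverse_mul hQs hker) hp i

theorem circumsphere_of_resistive_embedding
    {n : ℕ} (hn : 2 ≤ n) (Q : Matrix (Fin n) (Fin n) ℝ)
    (hQ : Q.PosSemidef)
    (hker : ∀ v : Fin n → ℝ, Q.mulVec v = 0 ↔ ∃ c : ℝ, v = fun _ => c)
    (B : Matrix (Fin (n - 1)) (Fin n) ℝ)
    (hB : Bᵀ * B = pinv Q)
    (hB1 : B.mulVec (fun _ => 1) = 0)
    (ζ : Fin n → ℝ) (hζ : ζ = fun i => pinv Q i i)
    (p : Fin n → ℝ)
    (hp : p = (1 / 2 : ℝ) • Q.mulVec ζ + (1 / (n : ℝ)) • ((fun _ => 1) : Fin n → ℝ))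
    (σ2 : ℝ) (hσ2 : σ2 = (1 / 4) * (ζ ⬝ᵥ Q.mulVec ζ) + (1 / (n : ℝ)) * ∑ i, ζ i) :
    ∀ i : Fin n,
      B.mulVec (p - Pi.single i 1) ⬝ᵥ B.mulVec (p - Pi.single i 1) = σ2 :=
  circumsphere_of_resistive_embedding_general Q hQ hker B hB ζ hζ p hp σ2 hσ2
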